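/- Define f : [0,1] → [0,1] by f(x) = Σ_{i=1}^∞ x_i · 2^(Σ_{j=1}^{i−1} x_j) · 3^(−i), where x = Σ_{i=1}^∞ x_i/2^i is a binary expansion of x with x_i ∈ {0,1}. Then this series converges absolutely, and its value does not depend on the choice of binary expansion: if x = Σ_{i=1}^k x_i/2^i + 1/2^{k+1} and also x = Σ_{i=1}^k x_i/2^i + Σ_{i=k+2}^∞ 1/2^i, both expansions give the same value of f(x). -/

import Mathlib

/-!
Each term is at most `2^i / 3^(i+1)`, so the series is dominated by a geometric series with
ratio `2/3`. For the two expansions of a dyadic rational, the terms before position `k + 1`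
coincide. At position `k + 1` the terminating expansion contributes `2^S / 3^(k+1)`, where `S` is
the number of ones among the first `k` digits, and nothing afterwards. The other expansion has a
zero there, and its tail of ones contributes `2^(S+n) / 3^(k+n+2)` at position `k + n + 2`;
these terms add up to the same `2^S / 3^(k+1)`.
-/

/-- The `i`-th term (for position `i+1`) of the series
`f(x) = Σ_{i≥1} x_i · 2^(Σ_{j=1}^{i-1} x_j) · 3^{-i}` for a binary digit
sequence `b` (indexed from 1). -/
noncomputable def salemTerm (b : ℕ → ℕ) (i : ℕ) : ℝ :=
  (b (i + 1) : ℝ) * 2 ^ (∑ j ∈ Finset.Icc 1 i, b j) * (1 / 3 : ℝ) ^ (i + 1)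

open Finset

lemma salemTerm_nonneg (b : ℕ → ℕ) (i : ℕ) : 0 ≤ salemTerm b i := by
  unfold salemTerm; positivity

lemma salemTerm_le {b : ℕ → ℕ} (hb : ∀ i, b i ≤ 1) (i : ℕ) :
    salemTerm b i ≤ (2 / 3 : ℝ) ^ i := by
  have hdigit : (b (i + 1) : ℝ) ≤ 1 := by exact_mod_cast hb (i + 1)
  have hcount : ∑ j ∈ Icc 1 i, b j ≤ i := by
    simpa using sum_le_sum fun j (_ : j ∈ Icc 1 i) => hb j
  have hpow : (2 : ℝ) ^ (∑ j ∈ Icc 1 i, b j) ≤ 2 ^ i := pow_le_pow_right₀ one_le_two hcount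
  calc salemTerm b i ≤ 1 * 2 ^ i * (1 / 3 : ℝ) ^ (i + 1) := by unfold salemTerm; gcongr
    _ = (2 / 3 : ℝ) ^ i / 3 := by rw [show (2 / 3 : ℝ) = 2 * (1 / 3) by norm_num, mul_pow]; ring
    _ ≤ (2 / 3 : ℝ) ^ i := div_le_self (by positivity) (by norm_num)

lemma summable_abs_salemTerm {b : ℕ → ℕ} (hb : ∀ i, b i ≤ 1) :
    Summable fun i => |salemTerm b i| :=
  (summable_geometric_of_lt_one (by norm_num) (by norm_num)).of_nonneg_of_le
    (fun i => abs_nonneg _) fun i => (abs_of_nonneg (salemTerm_nonneg b i)).trans_le (salemTerm_le hb i)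

lemma sum_Icc_congr_of_le {b c : ℕ → ℕ} {i : ℕ} (h : ∀ j ≤ i, b j = c j) :
    ∑ j ∈ Icc 1 i, b j = ∑ j ∈ Icc 1 i, c j :=
  sum_congr rfl fun j hj => h j (mem_Icc.mp hj).2

lemma salemTerm_congr_of_le {b c : ℕ → ℕ} {i : ℕ} (h : ∀ j ≤ i + 1, b j = c j) :
    salemTerm b i = salemTerm c i := by
  unfold salemTerm
  rw [h (i + 1) le_rfl, sum_Icc_congr_of_le fun j hj => h j (by omega)]

lemma salemTerm_of_eq_zero {b : ℕ → ℕ} {i : ℕ} (h : b (i + 1) = 0) : salemTerm b i = 0 := by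
  simp [salemTerm, h]

lemma sum_Icc_add_of_eq_one {c : ℕ → ℕ} {m : ℕ} (h : ∀ j, m < j → c j = 1) (n : ℕ) :
    ∑ j ∈ Icc 1 (m + n), c j = ∑ j ∈ Icc 1 m, c j + n := by
  induction n with
  | zero => rfl
  | succ n ih =>
    rw [← add_assoc, sum_Icc_succ_top (by omega), ih, h _ (by omega), add_assoc]

lemma salemTerm_add_of_eq_one {c : ℕ → ℕ} {m : ℕ} (h : ∀ j, m < j → c j = 1) (n : ℕ) :
    salemTerm c (n + m) = 2 ^ (∑ j ∈ Icc 1 m, c j) * (1 / 3 : ℝ) ^ (m + 1) * (2 / 3) ^ n := by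
  unfold salemTerm
  rw [h _ (by omega), add_comm n m, sum_Icc_add_of_eq_one h,
    show (2 / 3 : ℝ) = 2 * (1 / 3) by norm_num, mul_pow]
  push_cast
  ring

lemma tsum_salemTerm_add_of_eq_one {c : ℕ → ℕ} {m : ℕ} (h : ∀ j, m < j → c j = 1) :
    ∑' n, salemTerm c (n + m) = 2 ^ (∑ j ∈ Icc 1 m, c j) * (1 / 3 : ℝ) ^ m := by
  simp_rw [salemTerm_add_of_eq_one h, tsum_mul_left,
    tsum_geometric_of_lt_one (by norm_num : (0 : ℝ) ≤ 2 / 3) (by norm_num)]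
  ring

theorem salemSeries_summable_and_welldef :
    (∀ b : ℕ → ℕ, (∀ i, b i ≤ 1) → Summable fun i => |salemTerm b i|) ∧
    (∀ b : ℕ → ℕ, (∀ i, b i ≤ 1) → ∀ k : ℕ,
      (∑' i, salemTerm (fun j => if j ≤ k then b j else if j = k + 1 then 1 else 0) i) =
      (∑' i, salemTerm (fun j => if j ≤ k then b j else if j = k + 1 then 0 else 1) i)) := by
  refine ⟨fun b hb => summable_abs_salemTerm hb, fun b hb k => ?_⟩
  set b₁ : ℕ → ℕ := fun j => if j ≤ k then b j else if j = k + 1 then 1 else 0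
  set b₂ : ℕ → ℕ := fun j => if j ≤ k then b j else if j = k + 1 then 0 else 1
  have hb₂ : ∀ i, b₂ i ≤ 1 := fun i => by dsimp only [b₂]; split_ifs <;> simp [hb]
  have hprefix : ∀ j ≤ k, b₁ j = b₂ j := fun j hj => by simp [b₁, b₂, hj]
  have hfinite : ∑' i, salemTerm b₁ i = ∑ i ∈ range (k + 1), salemTerm b₁ i :=
    tsum_eq_sum fun i hi => salemTerm_of_eq_zero <| by
      rw [mem_range, not_lt] at hi
      simp only [b₁]; rw [if_neg (by omega), if_neg (by omega)]
  have hsplit := (summable_abs_salemTerm hb₂).of_abs.sum_add_tsum_nat_add (k + 1)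
  have htail : ∑' n, salemTerm b₂ (n + (k + 1)) = salemTerm b₁ k := by
    rw [tsum_salemTerm_add_of_eq_one fun j hj => by
      simp only [b₂]; rw [if_neg (by omega), if_neg (by omega)],
      sum_Icc_succ_top (by omega), ← sum_Icc_congr_of_le hprefix]
    simp [salemTerm, b₁, b₂]
  rw [hfinite, ← hsplit, htail, sum_range_succ, sum_range_succ,
    salemTerm_of_eq_zero (by simp [b₂] : b₂ (k + 1) = 0),
    sum_congr rfl fun i hi => salemTerm_congr_of_le fun j hj =>
      hprefix j (by have := mem_range.mp hi; omega)]
  ring
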